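/- The set 𝒯 = {T ⊆ V : T is a town on some level i ∈ ℕ} forms a laminar family: any two of its members are either nested or disjoint. Furthermore, any town T ∈ 𝒯 of level i has either 0 or at least 2 child towns in the laminar order, and every child town of T is a town on a level strictly below i. -/

import Mathlib

open SimpleGraph

universe u

variable {V : Type u}

/-- The length of a walk in a graph `G` with edge lengths `len`. -/
noncomputable def wlen {G : SimpleGraph V} (len : V → V → ℝ) {u v : V} (w : G.Walk u v) : ℝ :=
  (w.darts.map (fun e => len e.toProd.1 e.toProd.2)).sum

/-- A walk is a *shortest path* (w.r.t. the shortest-path metric `d`) if it is a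
path whose total length equals the distance between its endpoints. -/
def IsShortestPath {G : SimpleGraph V} (len d : V → V → ℝ) {u v : V}
    (w : G.Walk u v) : Prop :=
  w.IsPath ∧ wlen len w = d u v

/-- `d` is the shortest-path metric of the graph `G` with edge lengths `len`:
it is a lower bound on the length of every walk, and for every pair of vertices it
is attained by some path (a shortest path). -/
def IsShortestPathMetric (G : SimpleGraph V) (len d : V → V → ℝ) : Prop :=
  (∀ (u v : V) (w : G.Walk u v), d u v ≤ wlen len w) ∧
  (∀ u v : V, ∃ w : G.Walk u v, IsShortestPath len d w)

/-- The closed ball `B_r(v)` of radius `r` around `v` (w.r.t. `d`). -/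
def cball (d : V → V → ℝ) (v : V) (r : ℝ) : Set V := {u | d u v ≤ r}

/-- A *shortest path cover* for scale `r` (with parameter `c`): a set of hubs
hitting every shortest path of length in `(r, c*r/2]`. -/
def IsSPC (G : SimpleGraph V) (len d : V → V → ℝ) (c r : ℝ) (H : Set V) : Prop :=
  ∀ (u v : V) (w : G.Walk u v), IsShortestPath len d w →
    r < wlen len w → wlen len w ≤ c * r / 2 → ∃ h ∈ H, h ∈ w.support

/-- A minimal shortest path cover: no proper subset is a shortest path cover. -/
def IsMinimalSPC (G : SimpleGraph V) (len d : V → V → ℝ) (c r : ℝ) (H : Set V) : Prop :=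
  IsSPC G len d c r H ∧ ∀ H' : Set V, H' ⊂ H → ¬ IsSPC G len d c r H'

/-- `H` is locally `s`-sparse for scale `r`: every ball of radius `c*r/2` contains
at most `s` vertices of `H`. -/
def LocallySparse (d : V → V → ℝ) (c r : ℝ) (s : ℕ) (H : Set V) : Prop :=
  ∀ v : V, (H ∩ cball d v (c * r / 2)).ncard ≤ s

/-- Definition 1: the highway dimension of `G` is at most `k` if for every scale
`r > 0` and every ball of radius `c*r`, there are at most `k` vertices in the ball
hitting all shortest paths of length more than `r` that lie inside the ball. -/
def HighwayDimLE (G : SimpleGraph V) (len d : V → V → ℝ) (c : ℝ) (k : ℕ) : Prop :=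
  ∀ r : ℝ, 0 < r → ∀ v : V, ∃ H : Set V, H ⊆ cball d v (c * r) ∧ H.ncard ≤ k ∧
    ∀ (a b : V) (w : G.Walk a b), IsShortestPath len d w →
      (∀ x ∈ w.support, x ∈ cball d v (c * r)) → r < wlen len w →
      ∃ h ∈ H, h ∈ w.support

/-- The scale `r_i = (c/4)^i` of level `i`. -/
noncomputable def rlev (c : ℝ) (i : ℕ) : ℝ := (c / 4) ^ i

/-- A *town* at level `i`, w.r.t. the fixed shortest path covers `SPC`. -/
def IsTownAt (d : V → V → ℝ) (SPC : ℕ → Set V) (c : ℝ) (i : ℕ) (T : Set V) : Prop :=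
  ∃ v : V, (∀ h ∈ SPC i, 2 * rlev c i < d v h) ∧ T = {u | d u v ≤ rlev c i}

/-- The *sprawl* at level `i`: all vertices lying in no town of level `i`. -/
def sprawl (d : V → V → ℝ) (SPC : ℕ → Set V) (c : ℝ) (i : ℕ) : Set V :=
  {u | ∀ T : Set V, IsTownAt d SPC c i T → u ∉ T}

/-- A member of the towns decomposition `𝒯`: a town at some level. -/
def IsTown (d : V → V → ℝ) (SPC : ℕ → Set V) (c : ℝ) (T : Set V) : Prop :=
  ∃ i : ℕ, IsTownAt d SPC c i T

/-- `T'` is a *child town* of `T` in the laminar family of towns: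
a maximal town strictly contained in `T`. -/
def IsChildTown (d : V → V → ℝ) (SPC : ℕ → Set V) (c : ℝ) (T' T : Set V) : Prop :=
  IsTown d SPC c T' ∧ IsTown d SPC c T ∧ T' ⊂ T ∧
    ∀ T'' : Set V, IsTown d SPC c T'' → T' ⊂ T'' → ¬ T'' ⊂ T

/-- The *core* `C_i` of a town `T` of level `j` on level `i ≤ j`:
`C j = T` and `C i = sprawl i ∩ C (i+1)` for `i < j`. -/
def townCore (d : V → V → ℝ) (SPC : ℕ → Set V) (c : ℝ) (T : Set V) (j i : ℕ) : Set V :=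
  T ∩ {u | ∀ q : ℕ, i ≤ q → q < j → u ∈ sprawl d SPC c q}

/-!
A town `B_r(v)` has no hub of scale `r` within `2r` of its centre, while two vertices at distance
in `(r, 2r] ⊆ (r, cr/2]` have a hub between them on a shortest path. Such a hub would lie within
`2r` of `v`, so a town has diameter at most `r` and contains every vertex within `2r` of its
centre. As the scales grow with the level, a town meeting a town of equal or higher level lies
inside it: this is laminarity, and it also forbids a child town of level `≥ i` inside a town of
level `i`. At level `0` the minimal cover is empty, so every vertex is a singleton town; a maximal
town below `T` through a vertex of `T` outside a given child is therefore a second child.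
-/

section ShortestPathMetric

variable {G : SimpleGraph V} {len d : V → V → ℝ}

lemma wlen_append {a b e : V} (p : G.Walk a b) (q : G.Walk b e) :
    wlen len (p.append q) = wlen len p + wlen len q := by
  simp [wlen, Walk.darts_append]

lemma wlen_reverse (hlen_symm : ∀ u v : V, len u v = len v u) {a b : V} (p : G.Walk a b) :
    wlen len p.reverse = wlen len p := by
  simp only [wlen, Walk.darts_reverse, List.map_reverse, List.sum_reverse, List.map_map]
  exact congrArg List.sum (List.map_congr_left fun e _ => hlen_symm _ _)

namespace IsShortestPathMetric

variable (hm : IsShortestPathMetric G len d)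
include hm

lemma dist_self (v : V) : d v v = 0 := by
  obtain ⟨p, hp, hpd⟩ := hm.2 v v
  rw [← hpd, (Walk.isPath_iff_nil.mp hp).eq_nil]
  simp [wlen]

lemma dist_triangle (a b e : V) : d a e ≤ d a b + d b e := by
  obtain ⟨p, -, hp⟩ := hm.2 a b
  obtain ⟨q, -, hq⟩ := hm.2 b e
  calc d a e ≤ wlen len (p.append q) := hm.1 a e _
    _ = d a b + d b e := by rw [wlen_append, hp, hq]

lemma dist_comm (hlen_symm : ∀ u v : V, len u v = len v u) (a b : V) : d a b = d b a := by
  have key : ∀ x y : V, d x y ≤ d y x := fun x y => by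
    obtain ⟨p, -, hp⟩ := hm.2 y x
    calc d x y ≤ wlen len p.reverse := hm.1 x y _
      _ = d y x := by rw [wlen_reverse hlen_symm, hp]
  exact (key a b).antisymm (key b a)

lemma dist_nonneg (hlen_symm : ∀ u v : V, len u v = len v u) (a b : V) : 0 ≤ d a b := by
  have := hm.dist_triangle a b a
  rw [hm.dist_self, hm.dist_comm hlen_symm b a] at this
  linarith

lemma add_le_wlen_of_mem_support [DecidableEq V] {a b h : V} (p : G.Walk a b)
    (hh : h ∈ p.support) : d a h + d h b ≤ wlen len p := by
  conv_rhs => rw [← p.take_spec hh]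
  rw [wlen_append]
  exact add_le_add (hm.1 _ _ _) (hm.1 _ _ _)

end IsShortestPathMetric

namespace IsSPC

variable {c r : ℝ} {H : Set V} (hH : IsSPC G len d c r H) (hm : IsShortestPathMetric G len d)
include hH hm

lemma exists_hub_add_le {a b : V} (h₁ : r < d a b) (h₂ : d a b ≤ c * r / 2) :
    ∃ h ∈ H, d a h + d h b ≤ d a b := by
  classical
  obtain ⟨p, hp⟩ := hm.2 a b
  obtain ⟨h, hhH, hhp⟩ := hH a b p hp (hp.2 ▸ h₁) (hp.2 ▸ h₂)
  exact ⟨h, hhH, hp.2 ▸ hm.add_le_wlen_of_mem_support p hhp⟩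

variable (hlen_symm : ∀ u v : V, len u v = len v u) (hc : 4 ≤ c) {v : V}
  (hv : ∀ h ∈ H, 2 * r < d v h)
include hlen_symm hc hv

lemma dist_le_of_dist_le_two_mul {w : V} (hw : d w v ≤ 2 * r) : d w v ≤ r := by
  by_contra! hgt
  obtain ⟨h, hhH, hsplit⟩ := hH.exists_hub_add_le hm hgt (by nlinarith)
  have := hv h hhH
  have := hm.dist_nonneg hlen_symm w h
  have := hm.dist_comm hlen_symm v h
  linarith

lemma dist_le_of_mem_ball {a b : V} (ha : d a v ≤ r) (hb : d b v ≤ r) : d a b ≤ r := by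
  by_contra! hgt
  have hab : d a b ≤ 2 * r := by
    have := hm.dist_triangle a v b
    have := hm.dist_comm hlen_symm v b
    linarith
  obtain ⟨h, hhH, hsplit⟩ := hH.exists_hub_add_le hm hgt (by nlinarith)
  have := hv h hhH
  have := hm.dist_triangle v a h
  have := hm.dist_triangle v b h
  have := hm.dist_comm hlen_symm v a
  have := hm.dist_comm hlen_symm v b
  have := hm.dist_comm hlen_symm b h
  linarith

end IsSPC

end ShortestPathMetric

lemma rlev_pos {c : ℝ} (hc : 0 < c) (i : ℕ) : 0 < rlev c i :=
  pow_pos (by positivity) i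

lemma rlev_mono {c : ℝ} (hc : 4 ≤ c) {i j : ℕ} (hij : i ≤ j) : rlev c i ≤ rlev c j :=
  pow_le_pow_right₀ (by linarith) hij

section Towns

variable {G : SimpleGraph V} {len d : V → V → ℝ} {c : ℝ} {SPC : ℕ → Set V}

lemma IsTownAt.nonempty (hm : IsShortestPathMetric G len d) (hc : 0 < c) {i : ℕ} {T : Set V}
    (hT : IsTownAt d SPC c i T) : T.Nonempty := by
  obtain ⟨v, -, rfl⟩ := hT
  exact ⟨v, by simpa only [Set.mem_ofPred_eq, hm.dist_self] using (rlev_pos hc i).le⟩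

lemma IsTownAt.subset_of_not_disjoint (hm : IsShortestPathMetric G len d)
    (hlen_symm : ∀ u v : V, len u v = len v u) (hc : 4 ≤ c) {i j : ℕ} (hij : i ≤ j)
    (hi : IsSPC G len d c (rlev c i) (SPC i)) (hj : IsSPC G len d c (rlev c j) (SPC j))
    {T₁ T₂ : Set V} (h₁ : IsTownAt d SPC c i T₁) (h₂ : IsTownAt d SPC c j T₂)
    (hnd : ¬ Disjoint T₁ T₂) : T₁ ⊆ T₂ := by
  obtain ⟨v₁, hv₁, rfl⟩ := h₁
  obtain ⟨v₂, hv₂, rfl⟩ := h₂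
  obtain ⟨x, hx₁, hx₂⟩ := Set.not_disjoint_iff.mp hnd
  intro w hw
  simp only [Set.mem_ofPred_eq] at hw hx₁ hx₂ ⊢
  have hwx : d w x ≤ rlev c j :=
    (hi.dist_le_of_mem_ball hm hlen_symm hc hv₁ hw hx₁).trans (rlev_mono hc hij)
  refine hj.dist_le_of_dist_le_two_mul hm hlen_symm hc hv₂ ?_
  linarith [hm.dist_triangle w x v₂]

lemma isTown_laminar (hm : IsShortestPathMetric G len d)
    (hlen_symm : ∀ u v : V, len u v = len v u) (hc : 4 ≤ c)
    (hSPC : ∀ i, IsSPC G len d c (rlev c i) (SPC i)) {T₁ T₂ : Set V}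
    (h₁ : IsTown d SPC c T₁) (h₂ : IsTown d SPC c T₂) :
    T₁ ⊆ T₂ ∨ T₂ ⊆ T₁ ∨ Disjoint T₁ T₂ := by
  obtain ⟨i, h₁⟩ := h₁
  obtain ⟨j, h₂⟩ := h₂
  by_cases hd : Disjoint T₁ T₂
  · exact .inr (.inr hd)
  rcases le_total i j with hij | hji
  · exact .inl (h₁.subset_of_not_disjoint hm hlen_symm hc hij (hSPC i) (hSPC j) h₂ hd)
  · exact .inr (.inl (h₂.subset_of_not_disjoint hm hlen_symm hc hji (hSPC j) (hSPC i) h₁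
      fun h => hd h.symm))

lemma IsChildTown.exists_level_lt (hm : IsShortestPathMetric G len d)
    (hlen_symm : ∀ u v : V, len u v = len v u) (hc : 4 ≤ c)
    (hSPC : ∀ i, IsSPC G len d c (rlev c i) (SPC i)) {i : ℕ} {T T' : Set V}
    (hT : IsTownAt d SPC c i T) (hT' : IsChildTown d SPC c T' T) :
    ∃ i' < i, IsTownAt d SPC c i' T' := by
  obtain ⟨j, hj⟩ := hT'.1
  refine ⟨j, lt_of_not_ge fun hij => ?_, hj⟩
  obtain ⟨x, hx⟩ := hj.nonempty hm (by linarith)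
  have hnd : ¬ Disjoint T T' := Set.not_disjoint_iff.mpr ⟨x, hT'.2.2.1.subset hx, hx⟩
  exact hT'.2.2.1.not_subset
    (hT.subset_of_not_disjoint hm hlen_symm hc hij (hSPC i) (hSPC j) hj hnd)

lemma IsMinimalSPC.eq_empty_of_separated (hm : IsShortestPathMetric G len d) {H : Set V}
    (hH : IsMinimalSPC G len d c 1 H) (hscale : ∀ u v : V, u ≠ v → c / 2 < d u v) :
    H = ∅ := by
  have hempty : IsSPC G len d c 1 ∅ := by
    intro a b p hp h₁ h₂
    rw [hp.2] at h₁ h₂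
    rcases eq_or_ne a b with rfl | hab
    · linarith [hm.dist_self a]
    · linarith [hscale a b hab]
  by_contra hne
  exact hH.2 ∅ (Set.empty_ssubset.mpr (Set.nonempty_iff_ne_empty.mpr hne)) hempty

lemma isTownAt_zero_singleton (hm : IsShortestPathMetric G len d) (hc : 2 ≤ c)
    (h₀ : SPC 0 = ∅) (hscale : ∀ u v : V, u ≠ v → c / 2 < d u v) (x : V) :
    IsTownAt d SPC c 0 {x} := by
  refine ⟨x, by simp [h₀], Set.ext fun w => ?_⟩
  simp only [Set.mem_singleton_iff, Set.mem_ofPred_eq, rlev, pow_zero]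
  constructor
  · rintro rfl
    simp [hm.dist_self]
  · intro hw
    by_contra hne
    linarith [hscale w x hne]

lemma exists_isChildTown_mem [Finite V] (hsingle : ∀ x : V, IsTown d SPC c {x}) {T : Set V}
    (hT : IsTown d SPC c T) {u : V} (hu : {u} ⊂ T) :
    ∃ T', IsChildTown d SPC c T' T ∧ u ∈ T' := by
  let S : Set (Set V) := {A | IsTown d SPC c A ∧ u ∈ A ∧ A ⊂ T}
  obtain ⟨T', ⟨hT'town, huT', hT'T⟩, hmax⟩ :=
    S.toFinite.exists_maximal ⟨{u}, hsingle u, rfl, hu⟩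
  refine ⟨T', ⟨hT'town, hT, hT'T, fun T'' hT'' hlt hT''T => ?_⟩, huT'⟩
  exact hlt.not_subset (hmax ⟨hT'', hlt.subset huT', hT''T⟩ hlt.subset)

lemma IsChildTown.exists_ne [Finite V] (hsingle : ∀ x : V, IsTown d SPC c {x})
    {T T' : Set V} (hT' : IsChildTown d SPC c T' T) (hne : T'.Nonempty) :
    ∃ T'', IsChildTown d SPC c T'' T ∧ T'' ≠ T' := by
  obtain ⟨u, huT, huT'⟩ := Set.exists_of_ssubset hT'.2.2.1
  obtain ⟨x, hx⟩ := hne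
  have hu : {u} ⊂ T :=
    Set.ssubset_iff_subset_ne.mpr ⟨Set.singleton_subset_iff.mpr huT, fun h =>
      huT' ((Set.mem_singleton_iff.mp (h ▸ hT'.2.2.1.subset hx : x ∈ ({u} : Set V))) ▸ hx)⟩
  obtain ⟨T'', hT'', huT''⟩ := exists_isChildTown_mem hsingle hT'.2.1 hu
  exact ⟨T'', hT'', fun h => huT' (h ▸ huT'')⟩

end Towns

theorem statement3_general {V : Type} [Fintype V] (G : SimpleGraph V) (len d : V → V → ℝ)
    (hlen_symm : ∀ u v : V, len u v = len v u)
    (hmetric : IsShortestPathMetric G len d)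
    (c : ℝ) (hc : 4 < c)
    (SPC : ℕ → Set V)
    (hSPC : ∀ i : ℕ, IsMinimalSPC G len d c (rlev c i) (SPC i))
    (hscale : ∀ u v : V, u ≠ v → c / 2 < d u v) :
    (∀ T₁ T₂ : Set V, IsTown d SPC c T₁ → IsTown d SPC c T₂ →
      T₁ ⊆ T₂ ∨ T₂ ⊆ T₁ ∨ Disjoint T₁ T₂) ∧
    (∀ (i : ℕ) (T : Set V), IsTownAt d SPC c i T →
      (∀ T' : Set V, IsChildTown d SPC c T' T →
        ∃ T'' : Set V, IsChildTown d SPC c T'' T ∧ T'' ≠ T') ∧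
      (∀ T' : Set V, IsChildTown d SPC c T' T →
        ∃ i' : ℕ, i' < i ∧ IsTownAt d SPC c i' T')) := by
  have hcover : ∀ i, IsSPC G len d c (rlev c i) (SPC i) := fun i => (hSPC i).1
  have h₀ : SPC 0 = ∅ :=
    IsMinimalSPC.eq_empty_of_separated hmetric (by simpa only [rlev, pow_zero] using hSPC 0) hscale
  have hsingle : ∀ x : V, IsTown d SPC c {x} :=
    fun x => ⟨0, isTownAt_zero_singleton hmetric (by linarith) h₀ hscale x⟩
  refine ⟨fun T₁ T₂ => isTown_laminar hmetric hlen_symm hc.le hcover,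
    fun i T hT => ⟨fun T' hT' => ?_, fun T' hT' => ?_⟩⟩
  · obtain ⟨j, hj⟩ := hT'.1
    exact hT'.exists_ne hsingle (hj.nonempty hmetric (by linarith))
  · exact hT'.exists_level_lt hmetric hlen_symm hc.le hcover hT

/-- Lemma 7 of the paper: the towns of all levels form a laminar
family (any two are nested or disjoint); moreover a town of level `i` has either 0
or at least 2 child towns, and every child town of it is a town on a level
strictly below `i`. -/
theorem statement3 {V : Type} [Fintype V] (G : SimpleGraph V) (len d : V → V → ℝ)
    (hlen_symm : ∀ u v : V, len u v = len v u)
    (hlen_pos : ∀ u v : V, G.Adj u v → 0 < len u v)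
    (hmetric : IsShortestPathMetric G len d)
    (c : ℝ) (hc : 4 < c)
    (SPC : ℕ → Set V)
    (hSPC : ∀ i : ℕ, IsMinimalSPC G len d c (rlev c i) (SPC i))
    (hscale : ∀ u v : V, u ≠ v → c / 2 < d u v) :
    (∀ T₁ T₂ : Set V, IsTown d SPC c T₁ → IsTown d SPC c T₂ →
      T₁ ⊆ T₂ ∨ T₂ ⊆ T₁ ∨ Disjoint T₁ T₂) ∧
    (∀ (i : ℕ) (T : Set V), IsTownAt d SPC c i T →
      (∀ T' : Set V, IsChildTown d SPC c T' T →
        ∃ T'' : Set V, IsChildTown d SPC c T'' T ∧ T'' ≠ T') ∧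
      (∀ T' : Set V, IsChildTown d SPC c T' T →
        ∃ i' : ℕ, i' < i ∧ IsTownAt d SPC c i' T')) :=
  statement3_general G len d hlen_symm hmetric c hc SPC hSPC hscale
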